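/- arXiv:1009.2815 — 2 statements merged into one kernel-verified Lean document; each statement's English description precedes it below -/
import Mathlib

section
/- Let E be a real inner product space and let σ(P,Q) = ½‖P−Q‖² be its world function. Define A(P₀,P₁,R) = √σ(P₀,R) + √σ(P₁,R) − √σ(P₁,P₀), A(P₀,R,P₁) = √σ(P₁,P₀) + √σ(P₁,R) − √σ(P₀,R), and B(P₀,P₁,R) = σ(P₁,R) − σ(P₀,R) − σ(P₁,P₀) − 2·√(σ(P₀,P₁)·σ(P₀,R)). Then for all points P₀, P₁, R in E, the Cauchy–Schwarz deficiency factorizes as ⟨P₁−P₀, R−P₀⟩² − ‖P₁−P₀‖²·‖R−P₀‖² = A(P₀,P₁,R)·A(P₀,R,P₁)·B(P₀,P₁,R). -/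
/-! With side lengths `a = ‖P₁ - P₀‖`, `b = ‖R - P₀‖`, `c = ‖P₁ - R‖` one has `√σ = side / √2`,
so `A P₀ P₁ R * A P₀ R P₁ * B P₀ P₁ R = (c² - (a - b)²) (c² - (a + b)²) / 4`, and by the law of
cosines `c² = a² + b² - 2 ⟪P₁ - P₀, R - P₀⟫` this is the Cauchy–Schwarz deficiency. -/

open RealInnerProductSpace

theorem sq_inner_sub_sq_norm_mul_sq_norm {E : Type*} [NormedAddCommGroup E]
    [InnerProductSpace ℝ E] (x y : E) :
    ⟪x, y⟫ ^ 2 - ‖x‖ ^ 2 * ‖y‖ ^ 2 =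
      (‖x - y‖ ^ 2 - (‖x‖ - ‖y‖) ^ 2) * (‖x - y‖ ^ 2 - (‖x‖ + ‖y‖) ^ 2) / 4 := by
  rw [norm_sub_sq_real]
  ring

theorem Real.sqrt_sq_div_two {x : ℝ} (hx : 0 ≤ x) : √(x ^ 2 / 2) = x / √2 := by
  rw [Real.sqrt_div (sq_nonneg x), Real.sqrt_sq hx]

theorem Real.sqrt_sq_div_two_mul_sq_div_two {x y : ℝ} (hx : 0 ≤ x) (hy : 0 ≤ y) :
    √(x ^ 2 / 2 * (y ^ 2 / 2)) = x * y / 2 := by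
  rw [show x ^ 2 / 2 * (y ^ 2 / 2) = (x * y / 2) ^ 2 by ring, Real.sqrt_sq (by positivity)]

/-- Factorization of the Cauchy–Schwarz deficiency: with `σ(P,Q) = ½‖P−Q‖²`,
`A(P₀,P₁,R) = √σ(P₀,R) + √σ(P₁,R) − √σ(P₁,P₀)`,
`A(P₀,R,P₁) = √σ(P₁,P₀) + √σ(P₁,R) − √σ(P₀,R)` and
`B(P₀,P₁,R) = σ(P₁,R) − σ(P₀,R) − σ(P₁,P₀) − 2√(σ(P₀,P₁)σ(P₀,R))`, one has
`⟨P₁−P₀,R−P₀⟩² − ‖P₁−P₀‖²‖R−P₀‖² = A(P₀,P₁,R)·A(P₀,R,P₁)·B(P₀,P₁,R)`. -/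
theorem cauchy_schwarz_deficiency_factorization
    {E : Type*} [NormedAddCommGroup E] [InnerProductSpace ℝ E]
    (σ : E → E → ℝ) (hσ : ∀ P Q : E, σ P Q = ‖P - Q‖ ^ 2 / 2)
    (A : E → E → E → ℝ)
    (hA : ∀ P₀ P₁ R : E,
      A P₀ P₁ R = Real.sqrt (σ P₀ R) + Real.sqrt (σ P₁ R) - Real.sqrt (σ P₁ P₀))
    (B : E → E → E → ℝ)
    (hB : ∀ P₀ P₁ R : E,
      B P₀ P₁ R = σ P₁ R - σ P₀ R - σ P₁ P₀ - 2 * Real.sqrt (σ P₀ P₁ * σ P₀ R)) :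
    ∀ P₀ P₁ R : E,
      ⟪P₁ - P₀, R - P₀⟫ ^ 2 - ‖P₁ - P₀‖ ^ 2 * ‖R - P₀‖ ^ 2 =
        A P₀ P₁ R * A P₀ R P₁ * B P₀ P₁ R := by
  intro P₀ P₁ R
  have hsqrt (P Q : E) : √(σ P Q) = ‖P - Q‖ / √2 := by
    rw [hσ, Real.sqrt_sq_div_two (norm_nonneg _)]
  have hA₀₁ : A P₀ P₁ R = (‖R - P₀‖ + ‖P₁ - R‖ - ‖P₁ - P₀‖) / √2 := by
    simp only [hA, hsqrt, norm_sub_rev P₀ R]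
    ring
  have hA₀₂ : A P₀ R P₁ = (‖P₁ - P₀‖ + ‖P₁ - R‖ - ‖R - P₀‖) / √2 := by
    simp only [hA, hsqrt, norm_sub_rev P₀ P₁, norm_sub_rev R P₁]
    ring
  have hB₀ : B P₀ P₁ R = (‖P₁ - R‖ ^ 2 - (‖P₁ - P₀‖ + ‖R - P₀‖) ^ 2) / 2 := by
    simp only [hB, hσ, norm_sub_rev P₀ P₁, norm_sub_rev P₀ R]
    rw [Real.sqrt_sq_div_two_mul_sq_div_two (norm_nonneg _) (norm_nonneg _)]
    ring
  rw [sq_inner_sub_sq_norm_mul_sq_norm, sub_sub_sub_cancel_right, hA₀₁, hA₀₂, hB₀]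
  field_simp
  rw [Real.sq_sqrt zero_le_two]
  ring
end

section
/- Let E be an n-dimensional real inner product space, let σ(P,Q) = ½‖P−Q‖² be its world function, and let P₀, P₁, …, P_n be points of E such that the vectors P₁−P₀, …, P_n−P₀ form a basis of E. Let g_{ik} = ⟨P_i−P₀, P_k−P₀⟩ be the (invertible) Gram matrix and g^{ik} its inverse, and define coordinates x_i(P) = ⟨P_i−P₀, P−P₀⟩. Then for all points P, Q in E: σ(P,Q) = ½ · Σ_{i,k=1}^{n} g^{ik} (x_i(P) − x_i(Q)) (x_k(P) − x_k(Q)). -/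
open RealInnerProductSpace

/-- Condition II of the Euclideaness: if the vectors `P_i − P₀` (`i = 1, …, n`)
form a basis of the `n`-dimensional space `E`, `g` is their Gram matrix and
`x_i(P) = ⟨P_i−P₀, P−P₀⟩`, then the world function `σ(P,Q) = ½‖P−Q‖²` satisfies
`σ(P,Q) = ½ Σᵢₖ g⁻¹ i k (xᵢ(P)−xᵢ(Q)) (xₖ(P)−xₖ(Q))`. -/
theorem world_function_via_metric_tensor
    {E : Type*} [NormedAddCommGroup E] [InnerProductSpace ℝ E]
    [FiniteDimensional ℝ E] (n : ℕ) (hn : Module.finrank ℝ E = n)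
    (σ : E → E → ℝ) (hσ : ∀ P Q : E, σ P Q = ‖P - Q‖ ^ 2 / 2)
    (P : Fin (n + 1) → E)
    (b : Module.Basis (Fin n) ℝ E) (hb : ∀ i : Fin n, b i = P i.succ - P 0)
    (g : Matrix (Fin n) (Fin n) ℝ)
    (hg : ∀ i k : Fin n, g i k = ⟪P i.succ - P 0, P k.succ - P 0⟫)
    (x : Fin n → E → ℝ)
    (hx : ∀ (i : Fin n) (Q : E), x i Q = ⟪P i.succ - P 0, Q - P 0⟫) :
    ∀ Q R : E,
      σ Q R = (1 / 2) * ∑ i : Fin n, ∑ k : Fin n,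
        g⁻¹ i k * (x i Q - x i R) * (x k Q - x k R) := by
  have hg' : ∀ i k : Fin n, g i k = ⟪b i, b k⟫ := by
    intro i k; rw [hg, hb, hb]
  -- symmetry of g
  have gsym : g.transpose = g := by
    ext i k; simp only [Matrix.transpose_apply, hg', real_inner_comm]
  -- key fact: for any coefficients c, ⟪b i, ∑ c j • b j⟫ = (g *ᵥ c) i
  have hGram : ∀ (c : Fin n → ℝ) (i : Fin n),
      ⟪b i, ∑ j : Fin n, c j • b j⟫ = ∑ j : Fin n, g i j * c j := by
    intro c i
    rw [inner_sum]
    refine Finset.sum_congr rfl fun j _ => ?_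
    rw [real_inner_smul_right, hg', mul_comm]
  -- invertibility of g
  have hdet : IsUnit g.det := by
    by_contra hdetne
    have hdz : g.det = 0 := by
      simpa [isUnit_iff_ne_zero] using hdetne
    obtain ⟨c, hc0, hcz⟩ := (Matrix.exists_mulVec_eq_zero_iff).2 hdz
    set w : E := ∑ j : Fin n, c j • b j with hw
    have hinner : ∀ i : Fin n, ⟪b i, w⟫ = 0 := by
      intro i
      rw [hw, hGram]
      have := congrFun hcz i
      simpa [Matrix.mulVec, dotProduct] using this
    have hwz : w = 0 := by
      have h2 : ⟪w, w⟫ = 0 := by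
        rw [hw]
        rw [sum_inner]
        refine Finset.sum_eq_zero fun i _ => ?_
        rw [real_inner_smul_left]
        rw [← hw, hinner i]; ring
      exact inner_self_eq_zero.mp h2
    have := Fintype.linearIndependent_iff.mp b.linearIndependent c (by rwa [← hw])
    exact hc0 (funext this)
  have hinvsym : (g⁻¹).transpose = g⁻¹ := by
    rw [Matrix.transpose_nonsing_inv, gsym]
  have hinv : g⁻¹ * g = 1 := Matrix.nonsing_inv_mul g hdet
  intro Q R
  set v : E := Q - R with hv
  have hxd : ∀ i : Fin n, x i Q - x i R = ⟪b i, v⟫ := by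
    intro i
    rw [hx, hx, hb, ← inner_sub_right, hv]
    congr 1
    abel
  set c : Fin n → ℝ := fun j => b.repr v j with hc
  have hvs : v = ∑ j : Fin n, c j • b j := (b.sum_repr v).symm
  have hy : ∀ i : Fin n, ⟪b i, v⟫ = ∑ j : Fin n, g i j * c j := by
    intro i; rw [hvs, hGram]
  -- a column sum against g⁻¹ recovers coordinates
  have hcol : ∀ k : Fin n, (∑ i : Fin n, g⁻¹ i k * ⟪b i, v⟫) = c k := by
    intro k
    calc (∑ i : Fin n, g⁻¹ i k * ⟪b i, v⟫)
        = ∑ i : Fin n, ∑ j : Fin n, g⁻¹ i k * (g i j * c j) := by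
          refine Finset.sum_congr rfl fun i _ => ?_
          rw [hy, Finset.mul_sum]
      _ = ∑ j : Fin n, (∑ i : Fin n, g⁻¹ i k * g i j) * c j := by
          rw [Finset.sum_comm]
          refine Finset.sum_congr rfl fun j _ => ?_
          rw [Finset.sum_mul]
          exact Finset.sum_congr rfl fun i _ => by ring
      _ = ∑ j : Fin n, (1 : Matrix (Fin n) (Fin n) ℝ) k j * c j := by
          refine Finset.sum_congr rfl fun j _ => ?_
          congr 1
          calc (∑ i : Fin n, g⁻¹ i k * g i j)
              = ((g⁻¹).transpose * g) k j := by
                simp [Matrix.mul_apply, Matrix.transpose_apply]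
            _ = (1 : Matrix (Fin n) (Fin n) ℝ) k j := by rw [hinvsym, hinv]
      _ = c k := by simp [Matrix.one_apply]
  have hsum : (∑ i : Fin n, ∑ k : Fin n,
      g⁻¹ i k * (x i Q - x i R) * (x k Q - x k R)) = ‖v‖ ^ 2 := by
    calc (∑ i : Fin n, ∑ k : Fin n, g⁻¹ i k * (x i Q - x i R) * (x k Q - x k R))
        = ∑ k : Fin n, (∑ i : Fin n, g⁻¹ i k * ⟪b i, v⟫) * ⟪b k, v⟫ := by
          rw [Finset.sum_comm]
          refine Finset.sum_congr rfl fun k _ => ?_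
          rw [Finset.sum_mul]
          exact Finset.sum_congr rfl fun i _ => by rw [hxd, hxd]
      _ = ∑ k : Fin n, c k * ⟪b k, v⟫ := by
          refine Finset.sum_congr rfl fun k _ => by rw [hcol]
      _ = ⟪v, v⟫ := by
          conv_rhs => rw [hvs]
          rw [sum_inner]
          refine Finset.sum_congr rfl fun k _ => ?_
          rw [real_inner_smul_left, ← hvs]
      _ = ‖v‖ ^ 2 := real_inner_self_eq_norm_sq v
  rw [hσ, hsum, ← hv]
  ring
end
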